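/- Let G be a graph, K = {v₁,…,v_q} a clique in G, and u, w two vertices outside K that are non-adjacent to every vertex of G outside K (i.e., N(u), N(w) ⊆ K), with u ≠ w and u, w non-adjacent. Suppose there exist indices 1 ≤ q_u ≤ q_w ≤ q with N(u) = {v₁,…,v_{q_u}} and N(w) = {v₁,…,v_{q_w}}. Then for every k ≥ 0, G has a feedback vertex set of size at most k if and only if G − u has a feedback vertex set of size at most k. -/

import Mathlib

/-! If at most one neighbour of `u` survives a feedback vertex set `Y` of `G - u`, then `Y` is
already one for `G`. Otherwise two survivors `a, b ∈ N(u) ⊆ N(w)` lie in the clique `N(w)`; as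
`G - Y - u` is acyclic it has no triangle, so `w ∈ Y` and `a, b` are the only vertices of `N(w)`
outside `Y`. Trading `w` for `a` leaves `b` as the only possible neighbour of each of the
non-adjacent `u` and `w`, and a vertex with at most one neighbour never lies on a cycle. -/

open SimpleGraph

def IsFVS {V : Type*} [Fintype V] (G : SimpleGraph V) (X : Finset V) : Prop :=
  (G.induce ((↑X : Set V)ᶜ)).IsAcyclic

def HasFVS {V : Type*} [Fintype V] (G : SimpleGraph V) (k : ℕ) : Prop :=
  ∃ X : Finset V, X.card ≤ k ∧ IsFVS G X

def delVert {V : Type*} (G : SimpleGraph V) (u : V) : SimpleGraph {x : V // x ≠ u} :=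
  G.comap Subtype.val

namespace SimpleGraph

variable {V : Type*} {G : SimpleGraph V} {s : Set V}

theorem isAcyclic_induce_iff :
    (G.induce s).IsAcyclic ↔
      ∀ ⦃v : V⦄ (c : G.Walk v v), c.IsCycle → ¬ ∀ x ∈ c.support, x ∈ s := by
  refine ⟨fun h v c hc hs => h (c.induce s hs) ?_, fun h v c hc => ?_⟩
  · rwa [← Walk.isCycle_map_iff_of_injective (f := (Embedding.induce s).toHom)
      Subtype.val_injective, Walk.map_induce]
  · refine h _ (hc.map (f := (Embedding.induce s).toHom) Subtype.val_injective) ?_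
    simp only [Walk.support_map, List.mem_map]
    rintro _ ⟨x, -, rfl⟩
    exact x.2

theorem not_isAcyclic_induce_of_triangle {a b c : V} (ha : a ∈ s) (hb : b ∈ s) (hc : c ∈ s)
    (hab : G.Adj a b) (hac : G.Adj a c) (hbc : G.Adj b c) : ¬ (G.induce s).IsAcyclic := by
  classical
  exact fun h => h.cliqueFree le_rfl {⟨a, ha⟩, ⟨b, hb⟩, ⟨c, hc⟩}
    (is3Clique_triple_iff.mpr ⟨induce_adj.mpr hab, induce_adj.mpr hac, induce_adj.mpr hbc⟩)

theorem IsAcyclic.induce_insert {u : V} (h : (G.induce s).IsAcyclic)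
    (hu : (G.neighborSet u ∩ s).Subsingleton) : (G.induce (insert u s)).IsAcyclic := by
  classical
  rw [isAcyclic_induce_iff] at h ⊢
  intro v c hc hcs
  by_cases huc : u ∈ c.support
  · set c' := c.rotate u huc
    have hc' : c'.IsCycle := hc.rotate huc
    have hmem : ∀ i, u ≠ c'.getVert i → c'.getVert i ∈ s := fun i hi =>
      (hcs _ ((Walk.mem_support_rotate_iff ..).mp (c'.getVert_mem_support i))).resolve_left hi.symm
    have hsnd := Walk.adj_snd hc'.not_nil
    have hpen := Walk.adj_penultimate hc'.not_nil
    exact hc'.snd_ne_penultimate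
      (hu ⟨hsnd, hmem 1 hsnd.ne⟩ ⟨hpen.symm, hmem _ hpen.ne'⟩)
  · exact h c hc fun x hx => (hcs x hx).resolve_left (ne_of_mem_of_not_mem hx huc)

end SimpleGraph

section FeedbackVertexSet

open Finset

variable {V : Type*} [Fintype V] {G : SimpleGraph V}

theorem IsFVS.mono {X Y : Finset V} (hXY : X ⊆ Y) (hX : IsFVS G X) : IsFVS G Y :=
  hX.embedding (G.induceHomOfLE (Set.compl_subset_compl.mpr (coe_subset.mpr hXY)))

variable [DecidableEq V]

theorem IsFVS.of_insert {X : Finset V} {u : V} (h : IsFVS G (insert u X))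
    (hu : (G.neighborSet u \ ↑X).Subsingleton) : IsFVS G X := by
  refine (h.induce_insert (u := u) (hu.anti ?_)).embedding (G.induceHomOfLE ?_)
  · intro x; simp +contextual
  · intro x; by_cases x = u <;> simp_all

theorem isFVS_delVert_iff {u : V} {X : Finset {x // x ≠ u}} :
    IsFVS (delVert G u) X ↔ IsFVS G (insert u (X.map (Function.Embedding.subtype _))) :=
  Iso.isAcyclic_iff
    { toFun z := ⟨z.1.1, by aesop⟩
      invFun z := ⟨⟨z.1, by aesop⟩, by aesop⟩
      map_rel_iff' := Iff.rfl }

theorem HasFVS.delVert {k : ℕ} (h : HasFVS G k) (u : V) : HasFVS (delVert G u) k := by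
  obtain ⟨X, hXk, hX⟩ := h
  refine ⟨X.subtype (· ≠ u), ?_, isFVS_delVert_iff.mpr (hX.mono fun x hx => ?_)⟩
  · exact (card_subtype _ _).trans_le ((card_filter_le _ _).trans hXk)
  · by_cases x = u <;> simp_all

theorem exists_isFVS_card_le_of_isFVS_insert {u w : V} (hne : u ≠ w) (hnadj : ¬ G.Adj u w)
    (hsub : G.neighborSet u ⊆ G.neighborSet w) (hK : G.IsClique (G.neighborSet w))
    {Y : Finset V} (hY : IsFVS G (insert u Y)) : ∃ X : Finset V, #X ≤ #Y ∧ IsFVS G X := by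
  by_cases hu : (G.neighborSet u \ ↑Y).Subsingleton
  · exact ⟨Y, le_rfl, hY.of_insert hu⟩
  obtain ⟨a, ⟨hua, haY⟩, b, ⟨hub, hbY⟩, hab⟩ := Set.not_subsingleton_iff.mp hu
  have hwa : G.Adj w a := hsub hua
  have hwb : G.Adj w b := hsub hub
  have hYc : ∀ {x}, x ≠ u → x ∉ Y → x ∈ (↑(insert u Y) : Set V)ᶜ := by simp_all
  have hwY : w ∈ Y := by
    by_contra hwY
    exact not_isAcyclic_induce_of_triangle (hYc hne.symm hwY) (hYc hua.ne' haY)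
      (hYc hub.ne' hbY) hwa hwb (hK hwa hwb hab) hY
  have hNw : ∀ x ∈ G.neighborSet w, x ∉ Y → x = a ∨ x = b := by
    intro x hwx hxY
    by_contra! hx
    exact not_isAcyclic_induce_of_triangle (hYc (fun h => hnadj (h ▸ hwx).symm) hxY)
      (hYc hua.ne' haY) (hYc hub.ne' hbY) (hK hwx hwa hx.1) (hK hwx hwb hx.2) (hK hwa hwb hab) hY
  set X := insert a (Y.erase w)
  have hNwX : G.neighborSet w \ ↑X ⊆ {b} := by
    rintro x ⟨hwx, hxX⟩
    simp only [X, coe_insert, coe_erase, Set.mem_insert_iff, Set.mem_sdiff, not_or] at hxX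
    exact (hNw x hwx fun hxY => hxX.2 ⟨hxY, (G.ne_of_adj hwx).symm⟩).resolve_left hxX.1
  refine ⟨X, (card_insert_le _ _).trans (card_erase_add_one hwY).le, ?_⟩
  have huwX : IsFVS G (insert u (insert w X)) := hY.mono (insert_subset_insert _ fun y hy => by
    by_cases y = w <;> simp_all [X])
  have hNuX : G.neighborSet u \ ↑(insert w X) ⊆ {b} := fun x ⟨hux, hx⟩ =>
    hNwX ⟨hsub hux, fun h => hx (by simp [h])⟩
  exact (huwX.of_insert (Set.subsingleton_singleton.anti hNuX)).of_insert
    (Set.subsingleton_singleton.anti hNwX)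

theorem hasFVS_iff_hasFVS_delVert {u w : V} (hne : u ≠ w) (hnadj : ¬ G.Adj u w)
    (hsub : G.neighborSet u ⊆ G.neighborSet w) (hK : G.IsClique (G.neighborSet w)) (k : ℕ) :
    HasFVS G k ↔ HasFVS (delVert G u) k := by
  refine ⟨fun h => h.delVert u, fun ⟨Y, hYk, hY⟩ => ?_⟩
  obtain ⟨X, hXY, hX⟩ :=
    exists_isFVS_card_le_of_isFVS_insert hne hnadj hsub hK (isFVS_delVert_iff.mp hY)
  exact ⟨X, hXY.trans ((card_map _).trans_le hYk), hX⟩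

end FeedbackVertexSet

theorem fvs_rule_R3_general {V : Type*} [Fintype V] [DecidableEq V]
    (G : SimpleGraph V) (q : ℕ) (v : Fin q → V)
    (hK : G.IsClique (Set.range v))
    (u w : V) (huw : u ≠ w) (hnadj : ¬ G.Adj u w)
    (qu qw : ℕ) (hquw : qu ≤ qw)
    (hNu : G.neighborSet u = v '' {i | (i : ℕ) < qu})
    (hNw : G.neighborSet w = v '' {i | (i : ℕ) < qw})
    (k : ℕ) :
    HasFVS G k ↔ HasFVS (delVert G u) k := by
  refine hasFVS_iff_hasFVS_delVert huw hnadj ?_ ?_ k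
  · rw [hNu, hNw]
    exact Set.image_mono fun i (hi : (i : ℕ) < qu) => hi.trans_le hquw
  · rw [hNw]
    exact hK.subset (Set.image_subset_range _ _)

/-- Safeness of rule (R3): if `u` and `w` are non-adjacent vertices outside the clique
`K = {v 0, …, v (q-1)}` whose neighborhoods are nested prefixes of `K`, then `u`
may be deleted. -/
theorem fvs_rule_R3 {V : Type*} [Fintype V] [DecidableEq V]
    (G : SimpleGraph V) (q : ℕ) (v : Fin q → V)
    (hvinj : Function.Injective v)
    (hK : G.IsClique (Set.range v))
    (u w : V) (huw : u ≠ w) (hnadj : ¬ G.Adj u w)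
    (hu : u ∉ Set.range v) (hw : w ∉ Set.range v)
    (qu qw : ℕ) (hqu1 : 1 ≤ qu) (hquw : qu ≤ qw) (hqwq : qw ≤ q)
    (hNu : G.neighborSet u = v '' {i | (i : ℕ) < qu})
    (hNw : G.neighborSet w = v '' {i | (i : ℕ) < qw})
    (k : ℕ) :
    HasFVS G k ↔ HasFVS (delVert G u) k :=
  fvs_rule_R3_general G q v hK u w huw hnadj qu qw hquw hNu hNw k
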